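/- Lemma 2.3, parts (1) and (2). Let Γ be an R-submodule of the lcsc R-module G and 𝕏→𝕏′=(X,𝒳′,μ,G)→𝕐 a short factors series. Then: (1) L²_FKaap(X,𝒳′,μ,G:Γ) is a closed linear subspace of (L²(X,𝒳′,μ),‖·‖₂) which is moreover closed under products of its bounded elements (it forms an algebra); (2) if φ∈L²(X,𝒳′,μ) is FK a.a.p. for G, then U_gφ is FK a.a.p. for G for every g∈G. -/

import Mathlib

open MeasureTheory Filter Set Topology
open scoped ENNReal

noncomputable section

namespace FE

variable {R G X Y : Type*}

/-- The disintegration `μ = ∫_Y μ_y dν(y)` of `μ` over an extension `π : X → Y`: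
each `μ_y` is a probability measure on `X`, `y ↦ μ_y B` is measurable, and
`μ (B ∩ π⁻¹ A) = ∫_A μ_y B dν`, coding `μ_{π x} B = E_μ(1_B | π⁻¹[𝒴])(x)`. -/
structure Disintegration [mXa : MeasurableSpace X] [mYa : MeasurableSpace Y]
    (μ : Measure X) (ν : Measure Y) (π : X → Y)
    (μy : Y → Measure X) : Prop where
  prob : ∀ y, IsProbabilityMeasure (μy y)
  meas : ∀ B : Set X, MeasurableSet B → Measurable fun y => μy y B
  eq : ∀ B : Set X, MeasurableSet B → ∀ A : Set Y, MeasurableSet A →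
    μ (B ∩ π ⁻¹' A) = ∫⁻ y in A, μy y B ∂ν

/-- The relative product (condition-independent) measure `μ ⊗_Y μ = ∫_Y μ_y ⊗ μ_y dν`. -/
def relProd [mXa : MeasurableSpace X] [mYa : MeasurableSpace Y]
    (ν : Measure Y) (μy : Y → Measure X) : Measure (X × X) :=
  ν.bind fun y => (μy y).prod (μy y)

/-- The relative convolution `H *_Y φ (x) = ∫_X H(x,x') φ(x') dμ_{π x}(x')`. -/
def relConv [mXa : MeasurableSpace X] (μy : Y → Measure X) (π : X → Y)
    (H : X × X → ℂ) (φ : X → ℂ) : X → ℂ :=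
  fun x => ∫ x', H (x, x') * φ x' ∂(μy (π x))

/-- Membership in `L²(X, 𝒳', μ)` where `m'` is a sub-σ-algebra `𝒳'`. -/
def MemL2 (m' : MeasurableSpace X) [mXa : MeasurableSpace X] (μ : Measure X)
    (φ : X → ℂ) : Prop :=
  Measurable[m'] φ ∧ MemLp φ 2 μ

/-- Essential boundedness. -/
def BddAE {α : Type*} [MeasurableSpace α] (ρ : Measure α) (f : α → ℂ) : Prop :=
  ∃ C : ℝ, ∀ᵐ a ∂ρ, ‖f a‖ ≤ C

/-- `φ` is FK almost periodic for `Γ`: for every `ε > 0` there are finitely many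
`ψ₁, …, ψ_k ∈ L²(X, 𝒳, μ)` such that for every `g ∈ Γ`,
`min_j ‖U_g φ − ψ_j‖_{2,y} < ε` for ν-a.e. `y`. -/
def IsFKap [mXa : MeasurableSpace X] [mYa : MeasurableSpace Y] (act : G → X → X)
    (μ : Measure X) (ν : Measure Y) (μy : Y → Measure X)
    (Γ : Set G) (φ : X → ℂ) : Prop :=
  ∀ ε : ℝ, 0 < ε → ∃ (k : ℕ) (ψ : Fin k → X → ℂ),
    (∀ j, MemLp (ψ j) 2 μ) ∧
    ∀ g ∈ Γ, ∀ᵐ y ∂ν,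
      ∃ j, eLpNorm (fun x => φ (act g x) - ψ j x) 2 (μy y) < ENNReal.ofReal ε

/-- `φ` is FK ν-almost almost-periodic for `Γ`: for all `δ, ε > 0` there are finitely many
`ψ₁, …, ψ_k ∈ L²(X, 𝒳, μ)` such that for every `g ∈ Γ`,
`min_j ‖U_g φ − ψ_j‖_{2,y} < ε` outside a set of `y` of ν-measure less than `δ`. -/
def IsFKaap [mXa : MeasurableSpace X] [mYa : MeasurableSpace Y] (act : G → X → X)
    (μ : Measure X) (ν : Measure Y) (μy : Y → Measure X)
    (Γ : Set G) (φ : X → ℂ) : Prop :=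
  ∀ δ ε : ℝ, 0 < δ → 0 < ε → ∃ (k : ℕ) (ψ : Fin k → X → ℂ),
    (∀ j, MemLp (ψ j) 2 μ) ∧
    ∀ g ∈ Γ,
      ν {y | ¬ ∃ j, eLpNorm (fun x => φ (act g x) - ψ j x) 2 (μy y) < ENNReal.ofReal ε}
        < ENNReal.ofReal δ

/-- The extension `π : 𝕏' → 𝕐` is relatively compact for `Γ`:
the FK a.p. (for `Γ`) functions are dense in `L²(X, 𝒳', μ)`. -/
def RelCompact (m' : MeasurableSpace X) [mXa : MeasurableSpace X] [mYa : MeasurableSpace Y]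
    (act : G → X → X) (μ : Measure X) (ν : Measure Y) (μy : Y → Measure X)
    (Γ : Set G) : Prop :=
  ∀ φ : X → ℂ, MemL2 m' μ φ → ∀ ε : ℝ, 0 < ε →
    ∃ ψ : X → ℂ, MemL2 m' μ ψ ∧ IsFKap act μ ν μy Γ ψ ∧
      eLpNorm (fun x => φ x - ψ x) 2 μ < ENNReal.ofReal ε

/-- `H` is invariant (a.e. with respect to `ρ`) for the diagonal `Γ`-action on `X × X`. -/
def DiagInvariant [mXa : MeasurableSpace X] (act : G → X → X) (ρ : Measure (X × X)) (Γ : Set G)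
    (H : X × X → ℂ) : Prop :=
  ∀ g ∈ Γ, (fun p : X × X => H (act g p.1, act g p.2)) =ᵐ[ρ] H

/-- The extension `π : 𝕏' → 𝕐` is jointly relatively weak-mixing for `Γ`:
every `Γ`-invariant `H ∈ L²(X×X, 𝒳'⊗𝒳', μ⊗_Yμ)` is a.e. a function on `𝕐`
via `π ×_Y π`. -/
def JointRelWM (m' : MeasurableSpace X) [mXa : MeasurableSpace X] [mYa : MeasurableSpace Y]
    (act : G → X → X) (ν : Measure Y) (μy : Y → Measure X) (π : X → Y)
    (Γ : Set G) : Prop :=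
  ∀ H : X × X → ℂ, Measurable[m'.prod m'] H → MemLp H 2 (relProd ν μy) →
    DiagInvariant act (relProd ν μy) Γ H →
    ∃ h : Y → ℂ, Measurable h ∧ H =ᵐ[relProd ν μy] fun p => h (π p.1)

/-- The extension of `𝕐` with σ-algebra `m'` on `X` is nontrivial:
`π⁻¹[𝒴] ≠ m'` (μ-mod 0). -/
def NontrivialExt (m' : MeasurableSpace X) [mXa : MeasurableSpace X] [mYa : MeasurableSpace Y]
    (μ : Measure X) (π : X → Y) : Prop :=
  ∃ A : Set X, MeasurableSet[m'] A ∧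
    ∀ B : Set Y, MeasurableSet B → μ (symmDiff A (π ⁻¹' B)) ≠ 0

/-- The extension `π : 𝕏' → 𝕐` is jointly relatively ergodic for `Γ`: every
`Γ`-invariant `f ∈ L^∞(X, 𝒳', μ)` is μ-a.e. a function on `𝕐`. -/
def JointRelErg (m' : MeasurableSpace X) [mXa : MeasurableSpace X] [mYa : MeasurableSpace Y]
    (act : G → X → X) (μ : Measure X) (π : X → Y) (Γ : Set G) : Prop :=
  ∀ f : X → ℂ, Measurable[m'] f → MemLp f ⊤ μ →
    (∀ g ∈ Γ, (fun x => f (act g x)) =ᵐ[μ] f) →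
    ∃ h : Y → ℂ, Measurable h ∧ f =ᵐ[μ] fun x => h (π x)

/-- `Γ` is an `R`-submodule of the `R`-module `G` (with scalar action `σ`):
a subgroup closed under scalar multiplication. -/
def IsSubmoduleSet [Group G] (σ : R → G → G) (Γ : Set G) : Prop :=
  (1 : G) ∈ Γ ∧ (∀ a ∈ Γ, ∀ b ∈ Γ, a * b ∈ Γ) ∧ (∀ a ∈ Γ, a⁻¹ ∈ Γ) ∧
    ∀ t : R, ∀ a ∈ Γ, σ t a ∈ Γ

/-- `G` is a Noetherian `R`-module: the ascending chain condition on `R`-submodules. -/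
def NoetherianModule [Group G] (σ : R → G → G) : Prop :=
  ∀ c : ℕ → Set G, (∀ n, IsSubmoduleSet σ (c n)) → (∀ n, c n ⊆ c (n + 1)) →
    ∃ N, ∀ n, N ≤ n → c n = c N

/-- The ring `R` is syndetic: for every `r ≠ 0` the set `rR` is syndetic in `R`,
i.e. `K + rR = R` for some compact `K`. -/
def SyndeticRing (R : Type*) [Ring R] [TopologicalSpace R] : Prop :=
  ∀ r : R, r ≠ 0 → ∃ K : Set R, IsCompact K ∧ ∀ x : R, ∃ k ∈ K, ∃ s : R, x = k + r * s

/-- The extension `π : 𝕏' → 𝕐` is totally relatively weak-mixing for `Γ`: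
for every `g ∈ Γ` with `g ≠ I`, every `⟨g⟩_R`-invariant `H ∈ L²(μ⊗_Yμ)` is a.e.
a function on `𝕐`. -/
def TotallyRelWM (m' : MeasurableSpace X) [mXa : MeasurableSpace X] [mYa : MeasurableSpace Y]
    [Group G] (σ : R → G → G) (act : G → X → X) (ν : Measure Y)
    (μy : Y → Measure X) (π : X → Y) (Γ : Set G) : Prop :=
  ∀ g ∈ Γ, g ≠ (1 : G) →
    JointRelWM m' act ν μy π (Set.range fun t : R => σ t g)

/-- The extension `π : (X, m', μ, G) → 𝕐` is primitive. -/
def PrimitiveExt (m' : MeasurableSpace X) [mXa : MeasurableSpace X] [mYa : MeasurableSpace Y]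
    [Group G] (σ : R → G → G) (act : G → X → X) (μ : Measure X) (ν : Measure Y)
    (μy : Y → Measure X) (π : X → Y) : Prop :=
  TotallyRelWM m' σ act ν μy π Set.univ ∨
  RelCompact m' act μ ν μy Set.univ ∨
  ∃ Grc Grw : Set G, IsSubmoduleSet σ Grc ∧ IsSubmoduleSet σ Grw ∧
    Grc ≠ ({1} : Set G) ∧ Grw ≠ ({1} : Set G) ∧ Grc ∩ Grw = ({1} : Set G) ∧
    (∀ g : G, ∃ a ∈ Grc, ∃ b ∈ Grw, g = a * b) ∧
    RelCompact m' act μ ν μy Grc ∧ TotallyRelWM m' σ act ν μy π Grw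

/-- Condition C1: the relative convolutions `H *_Y φ`, with `H` bounded `Γ`-invariant
in `L²(μ⊗_Yμ)` and `φ` bounded in `L²(X,𝒳',μ)`, span a dense subspace of `L²(X,𝒳',μ)`. -/
def C1 (m' : MeasurableSpace X) [mXa : MeasurableSpace X] [mYa : MeasurableSpace Y]
    (act : G → X → X) (μ : Measure X) (ν : Measure Y) (μy : Y → Measure X)
    (π : X → Y) (Γ : Set G) : Prop :=
  ∀ f : X → ℂ, MemL2 m' μ f → ∀ ε : ℝ, 0 < ε →
    ∃ (k : ℕ) (c : Fin k → ℂ) (H : Fin k → X × X → ℂ) (φ : Fin k → X → ℂ),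
      (∀ i, Measurable[m'.prod m'] (H i) ∧ MemLp (H i) 2 (relProd ν μy) ∧
        BddAE (relProd ν μy) (H i) ∧ DiagInvariant act (relProd ν μy) Γ (H i)) ∧
      (∀ i, MemL2 m' μ (φ i) ∧ BddAE μ (φ i)) ∧
      eLpNorm (fun x => f x - ∑ i, c i * relConv μy π (H i) (φ i) x) 2 μ
        < ENNReal.ofReal ε

/-- Condition C2: the FK a.p. (for `Γ`) functions are dense in `L²(X,𝒳',μ)`. -/
def C2 (m' : MeasurableSpace X) [mXa : MeasurableSpace X] [mYa : MeasurableSpace Y]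
    (act : G → X → X) (μ : Measure X) (ν : Measure Y) (μy : Y → Measure X)
    (Γ : Set G) : Prop :=
  RelCompact m' act μ ν μy Γ

/-- Condition C3: every `φ ∈ L²(X,𝒳',μ)` admits, for each `δ > 0`, a set `B ∈ 𝒴` with
`ν(B) > 1 − δ` such that the modification `φ_B = 1_{π⁻¹[B]}·φ` is FK a.p. for `Γ`. -/
def C3 (m' : MeasurableSpace X) [mXa : MeasurableSpace X] [mYa : MeasurableSpace Y]
    (act : G → X → X) (μ : Measure X) (ν : Measure Y) (μy : Y → Measure X)
    (π : X → Y) (Γ : Set G) : Prop :=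
  ∀ φ : X → ℂ, MemL2 m' μ φ → ∀ δ : ℝ, 0 < δ →
    ∃ B : Set Y, MeasurableSet B ∧ 1 - δ < (ν B).toReal ∧
      IsFKap act μ ν μy Γ ((π ⁻¹' B).indicator φ)

/-- Condition C4: every `φ ∈ L²(X,𝒳',μ)` is FK ν-almost almost-periodic for `Γ`. -/
def C4 (m' : MeasurableSpace X) [mXa : MeasurableSpace X] [mYa : MeasurableSpace Y]
    (act : G → X → X) (μ : Measure X) (ν : Measure Y) (μy : Y → Measure X)
    (Γ : Set G) : Prop :=
  ∀ φ : X → ℂ, MemL2 m' μ φ → IsFKaap act μ ν μy Γ φ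

/-- A measure on `G` carried by `Γ` and left-invariant under elements of `Γ`
(a left Haar measure of `Γ`). -/
def LeftInvariantOn [Group G] [MeasurableSpace G] (mΓ : Measure G) (Γ : Set G) : Prop :=
  mΓ Γᶜ = 0 ∧
    ∀ g ∈ Γ, ∀ A : Set G, MeasurableSet A → mΓ ((fun h => g * h) ⁻¹' A) = mΓ A

/-- A weak Følner sequence in `Γ` for the measure `mΓ`. -/
def IsWeakFolner [Group G] [TopologicalSpace G] [MeasurableSpace G]
    (mΓ : Measure G) (Γ : Set G) (F : ℕ → Set G) : Prop :=
  (∀ n, IsCompact (F n)) ∧ (∀ n, F n ⊆ Γ) ∧ (∀ n, 0 < mΓ (F n)) ∧ (∀ n, mΓ (F n) < ⊤) ∧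
    ∀ g ∈ Γ, Tendsto (fun n => mΓ (symmDiff ((fun h => g * h) '' F n) (F n)) / mΓ (F n))
      atTop (nhds 0)

/-- The Følner average `(1/m_Γ(F_n)) ∫_{F_n} U_g (φ ⊗ φ̄) dg` as a function on `X × X`. -/
def FolnerAvg [MeasurableSpace G] (act : G → X → X) (mΓ : Measure G) (F : ℕ → Set G)
    (φ : X → ℂ) (n : ℕ) : X × X → ℂ :=
  fun p => (mΓ (F n)).toReal⁻¹ •
    ∫ g in F n, φ (act g p.1) * (starRingEnd ℂ) (φ (act g p.2)) ∂mΓ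

/-- Condition C5: for any weak Følner sequence in `Γ` and any `φ ∈ L²(X,𝒳',μ)`,
the weak `L²(μ⊗_Yμ)`-limit `P(φ⊗φ̄)` of the Følner averages vanishes iff `φ = 0`. -/
def C5 (m' : MeasurableSpace X) [mXa : MeasurableSpace X] [mYa : MeasurableSpace Y]
    [Group G] [TopologicalSpace G] [MeasurableSpace G]
    (act : G → X → X) (μ : Measure X) (ν : Measure Y) (μy : Y → Measure X)
    (Γ : Set G) : Prop :=
  ∀ mΓ : Measure G, LeftInvariantOn mΓ Γ →
  ∀ F : ℕ → Set G, IsWeakFolner mΓ Γ F →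
  ∀ φ : X → ℂ, MemL2 m' μ φ →
  ∀ P : X × X → ℂ, MemLp P 2 (relProd ν μy) →
    (∀ ψ : X × X → ℂ, MemLp ψ 2 (relProd ν μy) →
      Tendsto
        (fun n => ∫ p, FolnerAvg act mΓ F φ n p * (starRingEnd ℂ) (ψ p) ∂(relProd ν μy))
        atTop (nhds (∫ p, P p * (starRingEnd ℂ) (ψ p) ∂(relProd ν μy)))) →
    (P =ᵐ[relProd ν μy] 0 ↔ φ =ᵐ[μ] 0)

/-- Condition C6: as C5 but with the limit taken in the `L²(μ⊗_Yμ)`-norm. -/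
def C6 (m' : MeasurableSpace X) [mXa : MeasurableSpace X] [mYa : MeasurableSpace Y]
    [Group G] [TopologicalSpace G] [MeasurableSpace G]
    (act : G → X → X) (μ : Measure X) (ν : Measure Y) (μy : Y → Measure X)
    (Γ : Set G) : Prop :=
  ∀ mΓ : Measure G, LeftInvariantOn mΓ Γ →
  ∀ F : ℕ → Set G, IsWeakFolner mΓ Γ F →
  ∀ φ : X → ℂ, MemL2 m' μ φ →
  ∀ P : X × X → ℂ, MemLp P 2 (relProd ν μy) →
    Tendsto (fun n => eLpNorm (fun p => FolnerAvg act mΓ F φ n p - P p) 2 (relProd ν μy))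
      atTop (nhds 0) →
    (P =ᵐ[relProd ν μy] 0 ↔ φ =ᵐ[μ] 0)

/-- Disintegration of `μ` over a factor given by a sub-σ-algebra `m₁` of the ambient
σ-algebra, via conditional measures `μc x`. -/
structure CondDisint (m₁ : MeasurableSpace X) [mXa : MeasurableSpace X] (μ : Measure X)
    (μc : X → Measure X) : Prop where
  prob : ∀ x, IsProbabilityMeasure (μc x)
  meas : ∀ B : Set X, MeasurableSet B → Measurable[m₁] fun x => μc x B
  eq : ∀ B : Set X, MeasurableSet B → ∀ A : Set X, MeasurableSet[m₁] A →
    μ (B ∩ A) = ∫⁻ x in A, μc x B ∂μ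

/-- The relative product measure over a factor via conditional measures. -/
def relProdC [mXa : MeasurableSpace X] (μ : Measure X) (μc : X → Measure X) : Measure (X × X) :=
  μ.bind fun x => (μc x).prod (μc x)

/-- FK almost periodicity, fiber measures given by conditional measures. -/
def IsFKapC [mXa : MeasurableSpace X] (act : G → X → X) (μ : Measure X) (μc : X → Measure X)
    (Γ : Set G) (φ : X → ℂ) : Prop :=
  ∀ ε : ℝ, 0 < ε → ∃ (k : ℕ) (ψ : Fin k → X → ℂ),
    (∀ j, MemLp (ψ j) 2 μ) ∧
    ∀ g ∈ Γ, ∀ᵐ x ∂μ,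
      ∃ j, eLpNorm (fun z => φ (act g z) - ψ j z) 2 (μc x) < ENNReal.ofReal ε

/-- FK almost almost-periodicity, fiber measures given by conditional measures. -/
def IsFKaapC [mXa : MeasurableSpace X] (act : G → X → X) (μ : Measure X) (μc : X → Measure X)
    (Γ : Set G) (φ : X → ℂ) : Prop :=
  ∀ δ ε : ℝ, 0 < δ → 0 < ε → ∃ (k : ℕ) (ψ : Fin k → X → ℂ),
    (∀ j, MemLp (ψ j) 2 μ) ∧
    ∀ g ∈ Γ,
      μ {x | ¬ ∃ j, eLpNorm (fun z => φ (act g z) - ψ j z) 2 (μc x) < ENNReal.ofReal ε}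
        < ENNReal.ofReal δ

/-- Relative compactness of the extension `(X,m₂,μ,G) → (X,m₁,μ,G)` for `Γ`,
with conditional measures `μc` over the base `m₁`. -/
def RelCompactC (m₂ : MeasurableSpace X) [mXa : MeasurableSpace X]
    (act : G → X → X) (μ : Measure X) (μc : X → Measure X) (Γ : Set G) : Prop :=
  ∀ φ : X → ℂ, MemL2 m₂ μ φ → ∀ ε : ℝ, 0 < ε →
    ∃ ψ : X → ℂ, MemL2 m₂ μ ψ ∧ IsFKapC act μ μc Γ ψ ∧
      eLpNorm (fun x => φ x - ψ x) 2 μ < ENNReal.ofReal ε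

/-- Relative C4-compactness: every function of `L²(X,m₂,μ)` is FK a.a.p. for `Γ`
relative to the base factor (whose conditional measures are `μc`). -/
def RelC4CompactC (m₂ : MeasurableSpace X) [mXa : MeasurableSpace X]
    (act : G → X → X) (μ : Measure X) (μc : X → Measure X) (Γ : Set G) : Prop :=
  ∀ φ : X → ℂ, MemL2 m₂ μ φ → IsFKaapC act μ μc Γ φ

/-- Joint relative weak-mixing of `(X,m₂,μ,G) → (X,m₁,μ,G)` for `Γ`. -/
def JointRelWMC (m₂ m₁ : MeasurableSpace X) [mXa : MeasurableSpace X]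
    (act : G → X → X) (μ : Measure X) (μc : X → Measure X) (Γ : Set G) : Prop :=
  ∀ H : X × X → ℂ, Measurable[m₂.prod m₂] H → MemLp H 2 (relProdC μ μc) →
    DiagInvariant act (relProdC μ μc) Γ H →
    ∃ h : X → ℂ, Measurable[m₁] h ∧ H =ᵐ[relProdC μ μc] fun p => h p.1

/-- Total relative weak-mixing of `(X,m₂,μ,G) → (X,m₁,μ,G)` for `Γ`. -/
def TotallyRelWMC (m₂ m₁ : MeasurableSpace X) [mXa : MeasurableSpace X] [Group G]
    (σ : R → G → G) (act : G → X → X) (μ : Measure X)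
    (μc : X → Measure X) (Γ : Set G) : Prop :=
  ∀ g ∈ Γ, g ≠ (1 : G) →
    JointRelWMC m₂ m₁ act μ μc (Set.range fun t : R => σ t g)

/-- Primitivity of the extension `(X,m₂,μ,G) → (X,m₁,μ,G)`. -/
def PrimitiveExtC (m₂ m₁ : MeasurableSpace X) [mXa : MeasurableSpace X] [Group G]
    (σ : R → G → G) (act : G → X → X) (μ : Measure X)
    (μc : X → Measure X) : Prop :=
  TotallyRelWMC m₂ m₁ σ act μ μc Set.univ ∨
  RelCompactC m₂ act μ μc Set.univ ∨
  ∃ Grc Grw : Set G, IsSubmoduleSet σ Grc ∧ IsSubmoduleSet σ Grw ∧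
    Grc ≠ ({1} : Set G) ∧ Grw ≠ ({1} : Set G) ∧ Grc ∩ Grw = ({1} : Set G) ∧
    (∀ g : G, ∃ a ∈ Grc, ∃ b ∈ Grw, g = a * b) ∧
    RelCompactC m₂ act μ μc Grc ∧ TotallyRelWMC m₂ m₁ σ act μ μc Grw

/-- Nontriviality of the extension given by the pair of σ-algebras `m₂ ⊇ m₁` (μ-mod 0). -/
def NontrivialPair (m₂ m₁ : MeasurableSpace X) [mXa : MeasurableSpace X]
    (μ : Measure X) : Prop :=
  ∃ A : Set X, MeasurableSet[m₂] A ∧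
    ∀ B : Set X, MeasurableSet[m₁] B → μ (symmDiff A B) ≠ 0

/-- Equality of two σ-algebras μ-mod 0. -/
def EqMod0 (m₁ m₂ : MeasurableSpace X) [mXa : MeasurableSpace X] (μ : Measure X) : Prop :=
  (∀ A : Set X, MeasurableSet[m₁] A → ∃ B, MeasurableSet[m₂] B ∧ μ (symmDiff A B) = 0) ∧
  (∀ A : Set X, MeasurableSet[m₂] A → ∃ B, MeasurableSet[m₁] B ∧ μ (symmDiff A B) = 0)

end FE

/-!
Everything is proved for one pair `(δ, ε)` at a time. Sums and products of two FK a.a.p.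
functions are approximated by the pairwise sums and products of their approximants, and the
exceptional sets of fibres add up; for products, the approximants of the second factor are first
truncated at an `L^∞` bound of the factors, which keeps the products in `L²` and costs only a
factor `2`. Closedness under `L²` limits comes from approximating an `L²`-small function by `0`:
the disintegration gives `∫ ‖f‖²_{2,y} dν(y) = ‖f‖²₂`, so by Chebyshev's inequality
`‖U_g f‖_{2,y} ≥ ε` only on a set of fibres of measure at most `‖f‖²₂ / ε²`, uniformly in `g`
since each `g` preserves `μ`. Translation invariance is `U_h U_g = U_{gh}`.
-/

namespace FE

section Truncation

variable {E : Type*} [NormedAddCommGroup E] [NormedSpace ℝ E]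

def truncate (C : ℝ) (b : E) : E := if ‖b‖ ≤ C then b else (C / ‖b‖) • b

theorem norm_truncate_le {C : ℝ} (hC : 0 ≤ C) (b : E) : ‖truncate C b‖ ≤ C := by
  unfold truncate
  split_ifs with h
  · exact h
  · have hb : 0 < ‖b‖ := hC.trans_lt (not_le.mp h)
    rw [norm_smul, Real.norm_of_nonneg (by positivity), div_mul_cancel₀ _ hb.ne']

theorem norm_sub_truncate_le {C : ℝ} {a : E} (ha : ‖a‖ ≤ C) (b : E) :
    ‖a - truncate C b‖ ≤ 2 * ‖a - b‖ := by
  unfold truncate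
  split_ifs with h
  · linarith [norm_nonneg (a - b)]
  have hb : 0 < ‖b‖ := (norm_nonneg a).trans_lt (ha.trans_lt (not_le.mp h))
  have hcoef : 0 ≤ 1 - C / ‖b‖ := by
    rw [sub_nonneg, div_le_one hb]
    exact (not_le.mp h).le
  have hcut : ‖b - (C / ‖b‖) • b‖ = ‖b‖ - C := by
    rw [show b - (C / ‖b‖) • b = (1 - C / ‖b‖) • b by rw [sub_smul, one_smul], norm_smul,
      Real.norm_of_nonneg hcoef, sub_mul, one_mul, div_mul_cancel₀ _ hb.ne']
  calc ‖a - (C / ‖b‖) • b‖ ≤ ‖a - b‖ + ‖b - (C / ‖b‖) • b‖ :=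
        norm_sub_le_norm_sub_add_norm_sub _ _ _
    _ ≤ 2 * ‖a - b‖ := by
      rw [hcut]
      linarith [norm_sub_norm_le b a, norm_sub_rev a b]

theorem measurable_truncate [MeasurableSpace E] [BorelSpace E] [SecondCountableTopology E]
    (C : ℝ) : Measurable (truncate C : E → E) :=
  Measurable.ite (measurableSet_le measurable_norm measurable_const) measurable_id
    ((measurable_const.div measurable_norm).smul measurable_id)

theorem norm_mul_sub_truncate_mul_le {A : Type*} [NormedCommRing A] [NormedAlgebra ℝ A]
    {C : ℝ} {a b : A} (ha : ‖a‖ ≤ C) (hb : ‖b‖ ≤ C) (u v : A) :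
    ‖a * b - truncate C v * u‖ ≤ C * ‖a - u‖ + 2 * C * ‖b - v‖ := by
  have hC : 0 ≤ C := (norm_nonneg a).trans ha
  calc ‖a * b - truncate C v * u‖ = ‖truncate C v * (a - u) + a * (b - truncate C v)‖ := by
        congr 1; ring
    _ ≤ ‖truncate C v‖ * ‖a - u‖ + ‖a‖ * ‖b - truncate C v‖ :=
        (norm_add_le _ _).trans (add_le_add (norm_mul_le _ _) (norm_mul_le _ _))
    _ ≤ C * ‖a - u‖ + C * (2 * ‖b - v‖) := by
        gcongr
        exacts [norm_truncate_le hC v, norm_sub_truncate_le hb v]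
    _ = C * ‖a - u‖ + 2 * C * ‖b - v‖ := by ring

end Truncation

theorem ofReal_half_add_half {r : ℝ} (hr : 0 ≤ r) :
    ENNReal.ofReal (r / 2) + ENNReal.ofReal (r / 2) = ENNReal.ofReal r := by
  rw [← ENNReal.ofReal_add (by positivity) (by positivity), add_halves]

variable {G X Y E : Type*} [MeasurableSpace X] [MeasurableSpace Y]
  {μ : Measure X} {ν : Measure Y} {π : X → Y} {μy : Y → Measure X}

theorem exists_pos_ae_norm_le_of_memLp_top [NormedAddCommGroup E] {f : X → E}
    (hf : MemLp f ⊤ μ) : ∃ C : ℝ, 0 < C ∧ ∀ᵐ x ∂μ, ‖f x‖ ≤ C := by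
  refine ⟨(eLpNorm f ⊤ μ).toReal + 1, by positivity, ?_⟩
  filter_upwards [ae_le_eLpNormEssSup (f := f) (μ := μ)] with x hx
  rw [← eLpNorm_exponent_top] at hx
  have := ENNReal.toReal_mono hf.eLpNorm_ne_top hx
  rw [toReal_enorm] at this
  linarith

theorem eLpNorm_two_sq [NormedAddCommGroup E] (f : X → E) (ρ : Measure X) :
    eLpNorm f 2 ρ ^ 2 = ∫⁻ x, ‖f x‖ₑ ^ 2 ∂ρ := by
  simpa using eLpNorm_nnreal_pow_eq_lintegral (f := f) (μ := ρ) (p := 2) two_ne_zero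

section Disintegration

variable [NormedAddCommGroup E] [MeasurableSpace E] [OpensMeasurableSpace E]

theorem Disintegration.measurable (hdis : Disintegration μ ν π μy) : Measurable μy :=
  Measure.measurable_of_measurable_coe _ hdis.meas

theorem Disintegration.bind_eq (hdis : Disintegration μ ν π μy) : ν.bind μy = μ := by
  ext s hs
  rw [Measure.bind_apply hs hdis.measurable.aemeasurable]
  simpa using (hdis.eq s hs univ MeasurableSet.univ).symm

theorem Disintegration.ae_ae (hdis : Disintegration μ ν π μy) {p : X → Prop}
    (h : ∀ᵐ x ∂μ, p x) : ∀ᵐ y ∂ν, ∀ᵐ x ∂μy y, p x :=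
  Measure.ae_ae_of_ae_bind hdis.measurable.aemeasurable (hdis.bind_eq ▸ h)

theorem Disintegration.lintegral_eLpNorm_fiber_sq (hdis : Disintegration μ ν π μy)
    {f : X → E} (hf : Measurable f) :
    ∫⁻ y, eLpNorm f 2 (μy y) ^ 2 ∂ν = eLpNorm f 2 μ ^ 2 := by
  simp only [eLpNorm_two_sq]
  rw [← hdis.bind_eq, Measure.lintegral_bind hdis.measurable.aemeasurable (by fun_prop)]

theorem Disintegration.measure_eLpNorm_fiber_ge_lt (hdis : Disintegration μ ν π μy)
    {f : X → E} (hf : Measurable f) {δ ε : ℝ≥0∞} (hε₀ : ε ≠ 0) (hε : ε ≠ ∞)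
    (h : eLpNorm f 2 μ ^ 2 < ε ^ 2 * δ) : ν {y | ε ≤ eLpNorm f 2 (μy y)} < δ := by
  have hmeas : Measurable fun y => eLpNorm f 2 (μy y) ^ 2 := by
    simp only [eLpNorm_two_sq]
    exact (Measure.measurable_lintegral (by fun_prop)).comp hdis.measurable
  have hmarkov := mul_meas_ge_le_lintegral₀ (hmeas.aemeasurable (μ := ν)) (ε ^ 2)
  rw [hdis.lintegral_eLpNorm_fiber_sq hf] at hmarkov
  have hsub : {y | ε ≤ eLpNorm f 2 (μy y)} ⊆ {y | ε ^ 2 ≤ eLpNorm f 2 (μy y) ^ 2} :=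
    ofPred_subset_ofPred.mpr fun _ hy => pow_le_pow_left₀ bot_le hy 2
  refine (ENNReal.mul_lt_mul_iff_right (pow_ne_zero 2 hε₀) (ENNReal.pow_ne_top hε)).mp ?_
  exact ((mul_le_mul_right (measure_mono hsub) _).trans hmarkov).trans_lt h

end Disintegration

variable {act : G → X → X} {Γ : Set G} {φ φ₁ φ₂ : X → ℂ} {δ δ₁ δ₂ ε ε₁ ε₂ : ℝ≥0∞}

def FKApprox (act : G → X → X) (μ : Measure X) (ν : Measure Y) (μy : Y → Measure X)
    (Γ : Set G) (φ : X → ℂ) (δ ε : ℝ≥0∞) : Prop :=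
  ∃ (k : ℕ) (ψ : Fin k → X → ℂ), (∀ j, MemLp (ψ j) 2 μ) ∧
    ∀ g ∈ Γ, ν {y | ¬ ∃ j, eLpNorm (fun x => φ (act g x) - ψ j x) 2 (μy y) < ε} < δ

theorem FKApprox.mono {δ' ε' : ℝ≥0∞} (h : FKApprox act μ ν μy Γ φ δ ε) (hδ : δ ≤ δ')
    (hε : ε ≤ ε') : FKApprox act μ ν μy Γ φ δ' ε' := by
  obtain ⟨k, ψ, hψ, hbad⟩ := h
  refine ⟨k, ψ, hψ, fun g hg =>
    (measure_mono fun y hy => ?_).trans_lt ((hbad g hg).trans_le hδ)⟩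
  exact fun ⟨j, hj⟩ => hy ⟨j, hj.trans_le hε⟩

theorem FKApprox.exists_measurable (hdis : Disintegration μ ν π μy)
    (h : FKApprox act μ ν μy Γ φ δ ε) :
    ∃ (k : ℕ) (ψ : Fin k → X → ℂ), (∀ j, Measurable (ψ j)) ∧ (∀ j, MemLp (ψ j) 2 μ) ∧
      ∀ g ∈ Γ, ν {y | ¬ ∃ j, eLpNorm (fun x => φ (act g x) - ψ j x) 2 (μy y) < ε} < δ := by
  obtain ⟨k, ψ, hψ, hbad⟩ := h
  set ψ' := fun j => (hψ j).aestronglyMeasurable.mk (ψ j)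
  have hψψ' : ∀ j, ψ j =ᵐ[μ] ψ' j := fun j => (hψ j).aestronglyMeasurable.ae_eq_mk
  refine ⟨k, ψ', fun j => (hψ j).aestronglyMeasurable.stronglyMeasurable_mk.measurable,
    fun j => (hψ j).ae_eq (hψψ' j), fun g hg => (measure_mono_ae ?_).trans_lt (hbad g hg)⟩
  filter_upwards [ae_all_iff.mpr fun j => hdis.ae_ae (hψψ' j)] with y hy hbad' ⟨j, hj⟩
  have hfib : (fun x => φ (act g x) - ψ' j x) =ᵐ[μy y] fun x => φ (act g x) - ψ j x :=
    (hy j).mono fun x hx => by simp [hx]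
  exact hbad' ⟨j, by rwa [eLpNorm_congr_ae hfib]⟩

theorem FKApprox.map₂ (hdis : Disintegration μ ν π μy) (W : (X → ℂ) → (X → ℂ) → X → ℂ)
    (hW : ∀ ψ χ, Measurable ψ → Measurable χ → MemLp ψ 2 μ → MemLp χ 2 μ → MemLp (W ψ χ) 2 μ)
    (h₁ : FKApprox act μ ν μy Γ φ₁ δ₁ ε₁) (h₂ : FKApprox act μ ν μy Γ φ₂ δ₂ ε₂)
    (hclose : ∀ g ∈ Γ, ∀ᵐ y ∂ν, ∀ ψ χ : X → ℂ, Measurable ψ → Measurable χ →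
      eLpNorm (fun x => φ₁ (act g x) - ψ x) 2 (μy y) < ε₁ →
      eLpNorm (fun x => φ₂ (act g x) - χ x) 2 (μy y) < ε₂ →
      eLpNorm (fun x => φ (act g x) - W ψ χ x) 2 (μy y) < ε) :
    FKApprox act μ ν μy Γ φ (δ₁ + δ₂) ε := by
  obtain ⟨k, ψ, hψm, hψ, hbad₁⟩ := h₁.exists_measurable hdis
  obtain ⟨l, χ, hχm, hχ, hbad₂⟩ := h₂.exists_measurable hdis
  refine ⟨k * l, fun i => W (ψ (finProdFinEquiv.symm i).1) (χ (finProdFinEquiv.symm i).2),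
    fun i => hW _ _ (hψm _) (hχm _) (hψ _) (hχ _), fun g hg => ?_⟩
  refine (measure_mono_ae ?_).trans_lt
    ((measure_union_le _ _).trans_lt (ENNReal.add_lt_add (hbad₁ g hg) (hbad₂ g hg)))
  filter_upwards [hclose g hg] with y hy hbad
  by_contra hgood
  change y ∉ (_ ∪ _ : Set Y) at hgood
  simp only [mem_union, mem_ofPred_eq, not_or, not_not] at hgood
  obtain ⟨⟨j, hj⟩, ⟨m, hm⟩⟩ := hgood
  exact hbad ⟨finProdFinEquiv (j, m), by simpa using hy _ _ (hψm j) (hχm m) hj hm⟩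

theorem FKApprox.add (hdis : Disintegration μ ν π μy) (hact : ∀ g, Measurable (act g))
    (hφ₁ : Measurable φ₁) (hφ₂ : Measurable φ₂)
    (h₁ : FKApprox act μ ν μy Γ φ₁ δ₁ ε₁) (h₂ : FKApprox act μ ν μy Γ φ₂ δ₂ ε₂) :
    FKApprox act μ ν μy Γ (fun x => φ₁ x + φ₂ x) (δ₁ + δ₂) (ε₁ + ε₂) := by
  refine h₁.map₂ hdis (fun ψ χ x => ψ x + χ x) (fun _ _ _ _ hψ hχ => hψ.add hχ) h₂
    fun g _ => ae_of_all _ fun y ψ χ hψ hχ hψε hχε => ?_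
  calc eLpNorm (fun x => φ₁ (act g x) + φ₂ (act g x) - (ψ x + χ x)) 2 (μy y)
      = eLpNorm ((fun x => φ₁ (act g x) - ψ x) + fun x => φ₂ (act g x) - χ x) 2 (μy y) := by
        congr 1; ext x; simp only [Pi.add_apply]; ring
    _ ≤ eLpNorm (fun x => φ₁ (act g x) - ψ x) 2 (μy y)
        + eLpNorm (fun x => φ₂ (act g x) - χ x) 2 (μy y) :=
        eLpNorm_add_le ((hφ₁.comp (hact g)).sub hψ).aestronglyMeasurable
          ((hφ₂.comp (hact g)).sub hχ).aestronglyMeasurable one_le_two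
    _ < ε₁ + ε₂ := ENNReal.add_lt_add hψε hχε

theorem FKApprox.const_mul {c : ℂ} (hc : c ≠ 0) (h : FKApprox act μ ν μy Γ φ δ ε) :
    FKApprox act μ ν μy Γ (fun x => c * φ x) δ (‖c‖ₑ * ε) := by
  obtain ⟨k, ψ, hψ, hbad⟩ := h
  refine ⟨k, fun j x => c * ψ j x, fun j => (hψ j).const_mul c,
    fun g hg => (measure_mono fun y hy => ?_).trans_lt (hbad g hg)⟩
  rintro ⟨j, hj⟩
  refine hy ⟨j, ?_⟩
  have hfun : (fun x => c * φ (act g x) - c * ψ j x) = c • fun x => φ (act g x) - ψ j x := by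
    ext x; simp [mul_sub]
  rw [hfun, eLpNorm_const_smul]
  exact ENNReal.mul_lt_mul_right (by simpa using hc) enorm_ne_top hj

theorem fkApprox_of_eLpNorm_sq_lt (hdis : Disintegration μ ν π μy)
    (hact : ∀ g, MeasurePreserving (act g) μ μ) (hφ : Measurable φ) (hε₀ : ε ≠ 0) (hε : ε ≠ ∞)
    (h : eLpNorm φ 2 μ ^ 2 < ε ^ 2 * δ) : FKApprox act μ ν μy Γ φ δ ε := by
  refine ⟨1, fun _ => 0, fun _ => MemLp.zero, fun g _ => ?_⟩
  have hφg : eLpNorm (fun x => φ (act g x)) 2 μ = eLpNorm φ 2 μ :=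
    eLpNorm_comp_measurePreserving hφ.aestronglyMeasurable (hact g)
  refine (measure_mono fun y hy => ?_).trans_lt
    (hdis.measure_eLpNorm_fiber_ge_lt (f := fun x => φ (act g x)) (hφ.comp (hact g).measurable)
      hε₀ hε (hφg ▸ h))
  simpa using hy

theorem FKApprox.mul (hdis : Disintegration μ ν π μy)
    (hact : ∀ g, MeasurePreserving (act g) μ μ)
    (hφ₁ : Measurable φ₁) (hφ₂ : Measurable φ₂) {C : ℝ} (hC : 0 < C)
    (hb₁ : ∀ᵐ x ∂μ, ‖φ₁ x‖ ≤ C) (hb₂ : ∀ᵐ x ∂μ, ‖φ₂ x‖ ≤ C)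
    (h₁ : FKApprox act μ ν μy Γ φ₁ δ₁ ε₁) (h₂ : FKApprox act μ ν μy Γ φ₂ δ₂ ε₂) :
    FKApprox act μ ν μy Γ (fun x => φ₁ x * φ₂ x) (δ₁ + δ₂)
      (ENNReal.ofReal C * ε₁ + ENNReal.ofReal (2 * C) * ε₂) := by
  refine h₁.map₂ hdis (fun ψ χ x => truncate C (χ x) * ψ x) (fun _ _ _ hχ hψ _ => hψ.mul'
    (memLp_top_of_bound ((measurable_truncate C).comp hχ).aestronglyMeasurable C
      (ae_of_all _ fun _ => norm_truncate_le hC.le _))) h₂ fun g _ => ?_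
  have hbound : ∀ᵐ x ∂μ, ‖φ₁ (act g x)‖ ≤ C ∧ ‖φ₂ (act g x)‖ ≤ C :=
    (hact g).quasiMeasurePreserving.ae (hb₁.and hb₂)
  filter_upwards [hdis.ae_ae hbound] with y hy ψ χ hψ hχ hψε hχε
  have hA := ((hφ₁.comp (hact g).measurable).sub hψ).norm
  have hB := ((hφ₂.comp (hact g).measurable).sub hχ).norm
  calc eLpNorm (fun x => φ₁ (act g x) * φ₂ (act g x) - truncate C (χ x) * ψ x) 2 (μy y)
      ≤ eLpNorm (fun x => C * ‖φ₁ (act g x) - ψ x‖ + 2 * C * ‖φ₂ (act g x) - χ x‖) 2 (μy y) :=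
        eLpNorm_mono_ae_real (hy.mono fun x hx => norm_mul_sub_truncate_mul_le hx.1 hx.2 _ _)
    _ ≤ eLpNorm (C • fun x => ‖φ₁ (act g x) - ψ x‖) 2 (μy y)
        + eLpNorm ((2 * C) • fun x => ‖φ₂ (act g x) - χ x‖) 2 (μy y) :=
        eLpNorm_add_le (hA.const_mul C).aestronglyMeasurable
          (hB.const_mul (2 * C)).aestronglyMeasurable one_le_two
    _ = ENNReal.ofReal C * eLpNorm (fun x => φ₁ (act g x) - ψ x) 2 (μy y)
        + ENNReal.ofReal (2 * C) * eLpNorm (fun x => φ₂ (act g x) - χ x) 2 (μy y) := by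
        rw [eLpNorm_const_smul, eLpNorm_const_smul, eLpNorm_norm, eLpNorm_norm,
          Real.enorm_of_nonneg hC.le, Real.enorm_of_nonneg (by positivity)]
    _ < ENNReal.ofReal C * ε₁ + ENNReal.ofReal (2 * C) * ε₂ :=
        ENNReal.add_lt_add
          (ENNReal.mul_lt_mul_right (by simpa using hC) ENNReal.ofReal_ne_top hψε)
          (ENNReal.mul_lt_mul_right (by simpa using hC) ENNReal.ofReal_ne_top hχε)

theorem IsFKaap.fkApprox (h : IsFKaap act μ ν μy Γ φ) {δ ε : ℝ} (hδ : 0 < δ) (hε : 0 < ε) :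
    FKApprox act μ ν μy Γ φ (ENNReal.ofReal δ) (ENNReal.ofReal ε) :=
  h δ ε hδ hε

theorem IsFKaap.of_fkApprox (h : ∀ δ ε : ℝ, 0 < δ → 0 < ε →
    FKApprox act μ ν μy Γ φ (ENNReal.ofReal δ) (ENNReal.ofReal ε)) : IsFKaap act μ ν μy Γ φ :=
  h

theorem IsFKaap.add (hdis : Disintegration μ ν π μy) (hact : ∀ g, Measurable (act g))
    (hφ₁ : Measurable φ₁) (hφ₂ : Measurable φ₂)
    (h₁ : IsFKaap act μ ν μy Γ φ₁) (h₂ : IsFKaap act μ ν μy Γ φ₂) :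
    IsFKaap act μ ν μy Γ (fun x => φ₁ x + φ₂ x) := by
  refine .of_fkApprox fun δ ε hδ hε => ?_
  rw [← ofReal_half_add_half hδ.le, ← ofReal_half_add_half hε.le]
  exact (h₁.fkApprox (half_pos hδ) (half_pos hε)).add hdis hact hφ₁ hφ₂
    (h₂.fkApprox (half_pos hδ) (half_pos hε))

theorem IsFKaap.const_mul (hdis : Disintegration μ ν π μy)
    (hact : ∀ g, MeasurePreserving (act g) μ μ) (hφ : Measurable φ) (h : IsFKaap act μ ν μy Γ φ)
    (c : ℂ) : IsFKaap act μ ν μy Γ (fun x => c * φ x) := by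
  refine .of_fkApprox fun δ ε hδ hε => ?_
  rcases eq_or_ne c 0 with rfl | hc
  · refine fkApprox_of_eLpNorm_sq_lt hdis hact (by fun_prop) (by simpa using hε)
      ENNReal.ofReal_ne_top ?_
    simpa using ENNReal.mul_pos (pow_ne_zero 2 (ENNReal.ofReal_pos.mpr hε).ne')
      (ENNReal.ofReal_pos.mpr hδ).ne'
  have hc' : 0 < ‖c‖ + 1 := by positivity
  refine ((h.fkApprox hδ (div_pos hε hc')).const_mul hc).mono le_rfl ?_
  rw [← ofReal_norm, ← ENNReal.ofReal_mul (norm_nonneg c)]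
  refine ENNReal.ofReal_le_ofReal ?_
  rw [mul_div_assoc', div_le_iff₀ hc']
  nlinarith [norm_nonneg c]

theorem IsFKaap.mul (hdis : Disintegration μ ν π μy)
    (hact : ∀ g, MeasurePreserving (act g) μ μ) (hφ₁ : Measurable φ₁) (hφ₂ : Measurable φ₂)
    (hφ₁top : MemLp φ₁ ⊤ μ) (hφ₂top : MemLp φ₂ ⊤ μ)
    (h₁ : IsFKaap act μ ν μy Γ φ₁) (h₂ : IsFKaap act μ ν μy Γ φ₂) :
    IsFKaap act μ ν μy Γ (fun x => φ₁ x * φ₂ x) := by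
  obtain ⟨C₁, hC₁, hb₁⟩ := exists_pos_ae_norm_le_of_memLp_top hφ₁top
  obtain ⟨C₂, hC₂, hb₂⟩ := exists_pos_ae_norm_le_of_memLp_top hφ₂top
  set C := max C₁ C₂
  have hC : 0 < C := lt_max_of_lt_left hC₁
  refine .of_fkApprox fun δ ε hδ hε => ?_
  have hε' : 0 < ε / (3 * C) := by positivity
  refine ((h₁.fkApprox (half_pos hδ) hε').mul hdis hact hφ₁ hφ₂ hC
    (hb₁.mono fun x hx => hx.trans (le_max_left _ _))
    (hb₂.mono fun x hx => hx.trans (le_max_right _ _))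
    (h₂.fkApprox (half_pos hδ) hε')).mono (ofReal_half_add_half hδ.le).le ?_
  rw [← ENNReal.ofReal_mul hC.le, ← ENNReal.ofReal_mul (by positivity),
    ← ENNReal.ofReal_add (by positivity) (by positivity)]
  refine ENNReal.ofReal_le_ofReal (le_of_eq ?_)
  field_simp
  ring

theorem isFKaap_of_tendsto_eLpNorm (hdis : Disintegration μ ν π μy)
    (hact : ∀ g, MeasurePreserving (act g) μ μ) (hφ : Measurable φ) {φn : ℕ → X → ℂ}
    (hφn : ∀ n, Measurable (φn n) ∧ IsFKaap act μ ν μy Γ (φn n))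
    (hlim : Tendsto (fun n => eLpNorm (fun x => φn n x - φ x) 2 μ) atTop (𝓝 0)) :
    IsFKaap act μ ν μy Γ φ := by
  refine .of_fkApprox fun δ ε hδ hε => ?_
  have hsmall : 0 < ENNReal.ofReal (ε / 2) ^ 2 * ENNReal.ofReal (δ / 2) :=
    ENNReal.mul_pos (pow_ne_zero 2 (ENNReal.ofReal_pos.mpr (half_pos hε)).ne')
      (ENNReal.ofReal_pos.mpr (half_pos hδ)).ne'
  obtain ⟨n, hn⟩ := ((ENNReal.Tendsto.pow (n := 2) hlim).eventually
    (gt_mem_nhds (by rwa [zero_pow two_ne_zero]))).exists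
  have hsub : eLpNorm (fun x => φ x - φn n x) 2 μ = eLpNorm (fun x => φn n x - φ x) 2 μ :=
    eLpNorm_sub_comm φ (φn n) 2 μ
  have hrest : FKApprox act μ ν μy Γ (fun x => φ x - φn n x) (ENNReal.ofReal (δ / 2))
      (ENNReal.ofReal (ε / 2)) :=
    fkApprox_of_eLpNorm_sq_lt hdis hact (hφ.sub (hφn n).1) (by simpa using hε)
      ENNReal.ofReal_ne_top (hsub ▸ hn)
  rw [← ofReal_half_add_half hδ.le, ← ofReal_half_add_half hε.le]
  simpa using ((hφn n).2.fkApprox (half_pos hδ) (half_pos hε)).add hdis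
    (fun g => (hact g).measurable) (hφn n).1 (hφ.sub (hφn n).1) hrest

theorem IsFKaap.comp_act [Mul G] (hmul : ∀ g h x, act (g * h) x = act g (act h x)) {g : G}
    (hg : ∀ h ∈ Γ, g * h ∈ Γ) (hφ : IsFKaap act μ ν μy Γ φ) :
    IsFKaap act μ ν μy Γ (fun x => φ (act g x)) := by
  intro δ ε hδ hε
  obtain ⟨k, ψ, hψ, hbad⟩ := hφ δ ε hδ hε
  exact ⟨k, ψ, hψ, fun h hh => by simpa only [hmul] using hbad (g * h) (hg h hh)⟩

end FE

theorem lemma_2_3_parts_1_2_general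
    {G X Y : Type*} [CommGroup G] (m' : MeasurableSpace X) [mX : MeasurableSpace X]
    [mY : MeasurableSpace Y] (μ : Measure X) (ν : Measure Y) (act : G → X → X)
    (hactmul : ∀ g h x, act (g * h) x = act g (act h x))
    (hactμ : ∀ g, MeasurePreserving (act g) μ μ) (π : X → Y) (hm'le : m' ≤ mX)
    (μy : Y → Measure X) (hdis : FE.Disintegration μ ν π μy) (Γ : Set G) :
    ((∀ φ ψ : X → ℂ, FE.MemL2 m' μ φ → FE.MemL2 m' μ ψ →
        FE.IsFKaap act μ ν μy Γ φ → FE.IsFKaap act μ ν μy Γ ψ →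
        FE.IsFKaap act μ ν μy Γ (fun x => φ x + ψ x)) ∧
      (∀ (c : ℂ) (φ : X → ℂ), FE.MemL2 m' μ φ → FE.IsFKaap act μ ν μy Γ φ →
        FE.IsFKaap act μ ν μy Γ (fun x => c * φ x)) ∧
      (∀ (φ : X → ℂ) (φn : ℕ → X → ℂ), FE.MemL2 m' μ φ →
        (∀ n, FE.MemL2 m' μ (φn n) ∧ FE.IsFKaap act μ ν μy Γ (φn n)) →
        Tendsto (fun n => eLpNorm (fun x => φn n x - φ x) 2 μ) atTop (nhds 0) →
        FE.IsFKaap act μ ν μy Γ φ) ∧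
      (∀ φ ψ : X → ℂ, FE.MemL2 m' μ φ → FE.MemL2 m' μ ψ →
        MemLp φ ⊤ μ → MemLp ψ ⊤ μ →
        FE.IsFKaap act μ ν μy Γ φ → FE.IsFKaap act μ ν μy Γ ψ →
        FE.IsFKaap act μ ν μy Γ (fun x => φ x * ψ x))) ∧
    (∀ φ : X → ℂ, FE.MemL2 m' μ φ → FE.IsFKaap act μ ν μy Set.univ φ →
      ∀ g : G, FE.IsFKaap act μ ν μy Set.univ (fun x => φ (act g x))) := by
  have hact : ∀ g, Measurable (act g) := fun g => (hactμ g).measurable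
  have hmeas : ∀ {φ : X → ℂ}, FE.MemL2 m' μ φ → Measurable φ :=
    fun hφ => hφ.1.mono hm'le le_rfl
  refine ⟨⟨fun φ ψ hφ hψ h₁ h₂ => h₁.add hdis hact (hmeas hφ) (hmeas hψ) h₂,
    fun c φ hφ h => h.const_mul hdis hactμ (hmeas hφ) c,
    fun φ φn hφ hφn hlim => FE.isFKaap_of_tendsto_eLpNorm hdis hactμ (hmeas hφ)
      (fun n => ⟨hmeas (hφn n).1, (hφn n).2⟩) hlim,
    fun φ ψ hφ hψ hφtop hψtop h₁ h₂ =>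
      h₁.mul hdis hactμ (hmeas hφ) (hmeas hψ) hφtop hψtop h₂⟩,
    fun φ _ h g => h.comp_act hactmul fun _ _ => mem_univ _⟩

/-- **Lemma 2.3, parts (1) and (2).**
(1) `L²_FKaap(X,𝒳',μ,G:Γ)` is a closed linear subspace of `(L²(X,𝒳',μ), ‖·‖₂)`
which is moreover closed under products of its bounded elements (it forms an algebra);
(2) if `φ ∈ L²(X,𝒳',μ)` is FK a.a.p. for `G`, then `U_g φ` is FK a.a.p. for `G`
for every `g ∈ G`. -/
theorem lemma_2_3_parts_1_2
    {R G X Y : Type*}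
    [Ring R] [TopologicalSpace R] [IsTopologicalAddGroup R]
    [LocallyCompactSpace R] [SecondCountableTopology R] [T2Space R]
    [CommGroup G] [TopologicalSpace G] [IsTopologicalGroup G]
    [LocallyCompactSpace G] [SecondCountableTopology G] [T2Space G]
    [MeasurableSpace G] [BorelSpace G]
    (m' : MeasurableSpace X)
    [mX : MeasurableSpace X] [StandardBorelSpace X]
    [mY : MeasurableSpace Y]
    (σ : R → G → G)
    (hσmul : ∀ (t : R) (S T : G), σ t (S * T) = σ t S * σ t T)
    (hσadd : ∀ (r t : R) (S : G), σ (r + t) S = σ r S * σ t S)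
    (hσcont : Continuous fun p : R × G => σ p.1 p.2)
    (μ : Measure X) [IsProbabilityMeasure μ]
    (ν : Measure Y) [IsProbabilityMeasure ν]
    (act : G → X → X)
    (hact1 : ∀ x, act 1 x = x)
    (hactmul : ∀ g h x, act (g * h) x = act g (act h x))
    (hactMeas : Measurable fun p : G × X => act p.1 p.2)
    (hactμ : ∀ g, MeasurePreserving (act g) μ μ)
    (actY : G → Y → Y)
    (hactY1 : ∀ y, actY 1 y = y)
    (hactYmul : ∀ g h y, actY (g * h) y = actY g (actY h y))
    (hactYMeas : Measurable fun p : G × Y => actY p.1 p.2)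
    (hactYν : ∀ g, MeasurePreserving (actY g) ν ν)
    (π : X → Y) (hπ : Measurable π) (hπmp : MeasurePreserving π μ ν)
    (hπeq : ∀ g x, π (act g x) = actY g (π x))
    (hm'le : m' ≤ mX)
    (hm'Y : MeasurableSpace.comap π mY ≤ m')
    (hm'inv : ∀ (g : G) (A : Set X), MeasurableSet[m'] A → MeasurableSet[m'] (act g ⁻¹' A))
    (μy : Y → Measure X) (hdis : FE.Disintegration μ ν π μy)
    (Γ : Set G) (hΓ : FE.IsSubmoduleSet σ Γ) :
    ((∀ φ ψ : X → ℂ, FE.MemL2 m' μ φ → FE.MemL2 m' μ ψ →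
        FE.IsFKaap act μ ν μy Γ φ → FE.IsFKaap act μ ν μy Γ ψ →
        FE.IsFKaap act μ ν μy Γ (fun x => φ x + ψ x)) ∧
      (∀ (c : ℂ) (φ : X → ℂ), FE.MemL2 m' μ φ → FE.IsFKaap act μ ν μy Γ φ →
        FE.IsFKaap act μ ν μy Γ (fun x => c * φ x)) ∧
      (∀ (φ : X → ℂ) (φn : ℕ → X → ℂ), FE.MemL2 m' μ φ →
        (∀ n, FE.MemL2 m' μ (φn n) ∧ FE.IsFKaap act μ ν μy Γ (φn n)) →
        Tendsto (fun n => eLpNorm (fun x => φn n x - φ x) 2 μ) atTop (nhds 0) →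
        FE.IsFKaap act μ ν μy Γ φ) ∧
      (∀ φ ψ : X → ℂ, FE.MemL2 m' μ φ → FE.MemL2 m' μ ψ →
        MemLp φ ⊤ μ → MemLp ψ ⊤ μ →
        FE.IsFKaap act μ ν μy Γ φ → FE.IsFKaap act μ ν μy Γ ψ →
        FE.IsFKaap act μ ν μy Γ (fun x => φ x * ψ x))) ∧
    (∀ φ : X → ℂ, FE.MemL2 m' μ φ → FE.IsFKaap act μ ν μy Set.univ φ →
      ∀ g : G, FE.IsFKaap act μ ν μy Set.univ (fun x => φ (act g x))) :=
  lemma_2_3_parts_1_2_general m' (mX := mX) (mY := mY) μ ν act hactmul hactμ π hm'le μy hdis Γ
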